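/- (Monotone decrease of alternating minimization, Theorem 4(i)) Let E be the space of real m×n matrices, S = { M ∈ E : every column of M has unit Euclidean norm }, D ∈ ℝ^{d×n} of full row rank d, β > 0, f : E → ℝ differentiable with L-Lipschitz gradient, and 0 < α < 1/L. Define F(M, P) = f(M) + (1/(2β))‖M − P D‖_F². Suppose the sequences (M_k) ⊆ S and (P_k) ⊆ ℝ^{m×d} satisfy: M_{k+1} minimizes N ↦ ⟨∇f(M_k), N − M_k⟩ + (1/(2α))‖N − M_k‖_F² + (1/(2β))‖N − P_k D‖_F² over N ∈ S, and P_{k+1} = M_{k+1} Dᵀ (D Dᵀ)⁻¹. Then for every k: F(M_{k+1}, P_{k+1}) ≤ F(M_k, P_k) − (1/(2α) − L/2)‖M_{k+1} − M_k‖_F²; in particular F(M_k, P_k) is monotonically nonincreasing. -/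

import Mathlib

/-
The argument is the standard sufficient-decrease estimate. Since `M_k ∈ S` competes in the
minimization defining `M_{k+1}`, the surrogate at `M_{k+1}` is at most `(1/(2β))‖M_k − P_k D‖_F²`.
The descent lemma for the `L`-Lipschitz gradient bounds `f(M_{k+1})` by the linearization plus
`(L/2)‖M_{k+1} − M_k‖_F²`, and `P_{k+1} = M_{k+1}Dᵀ(DDᵀ)⁻¹` solves the least-squares problem
`min_P ‖M_{k+1} − PD‖_F²`, because the residual `M_{k+1} − P_{k+1}D` is orthogonal to the
row space of `D`. Adding the three inequalities gives the decrease, and `α < 1/L` makes its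
coefficient nonnegative.
-/

open Matrix

attribute [local instance] Matrix.normedAddCommGroup Matrix.normedSpace

/-- The Euclidean norm of the `i`-th column of a matrix. -/
noncomputable def colNorm {m n : ℕ} (M : Matrix (Fin m) (Fin n) ℝ) (i : Fin n) : ℝ :=
  Real.sqrt (∑ k, M k i ^ 2)

/-- The Frobenius inner product `⟨A, B⟩ = Σ_{i,j} a_{ij} b_{ij}` of m×n matrices. -/
noncomputable def finner {m n : ℕ} (A B : Matrix (Fin m) (Fin n) ℝ) : ℝ :=
  ∑ i, ∑ j, A i j * B i j

/-- The squared Frobenius norm `‖V‖_F²`. -/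
noncomputable def frobSq {m n : ℕ} (V : Matrix (Fin m) (Fin n) ℝ) : ℝ :=
  ∑ i, ∑ j, V i j ^ 2

/-- The Frobenius norm `‖V‖_F`. -/
noncomputable def frobNorm {m n : ℕ} (V : Matrix (Fin m) (Fin n) ℝ) : ℝ :=
  Real.sqrt (frobSq V)

open Set

section

variable {m n d : ℕ}

lemma frobSq_nonneg (V : Matrix (Fin m) (Fin n) ℝ) : 0 ≤ frobSq V := by
  unfold frobSq; positivity

@[simp]
lemma frobSq_zero : frobSq (0 : Matrix (Fin m) (Fin n) ℝ) = 0 := by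
  simp [frobSq]

lemma frobSq_smul (t : ℝ) (V : Matrix (Fin m) (Fin n) ℝ) :
    frobSq (t • V) = t ^ 2 * frobSq V := by
  simp [frobSq, mul_pow, Finset.mul_sum]

lemma frobSq_add (A B : Matrix (Fin m) (Fin n) ℝ) :
    frobSq (A + B) = frobSq A + 2 * finner A B + frobSq B := by
  simp only [frobSq, finner, Matrix.add_apply, Finset.mul_sum, ← Finset.sum_add_distrib]
  congr! 2; ring

lemma mul_self_frobNorm (V : Matrix (Fin m) (Fin n) ℝ) :
    frobNorm V * frobNorm V = frobSq V :=
  Real.mul_self_sqrt (frobSq_nonneg V)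

lemma frobNorm_nonneg (V : Matrix (Fin m) (Fin n) ℝ) : 0 ≤ frobNorm V :=
  Real.sqrt_nonneg _

lemma frobNorm_smul (t : ℝ) (V : Matrix (Fin m) (Fin n) ℝ) :
    frobNorm (t • V) = |t| * frobNorm V := by
  rw [frobNorm, frobSq_smul, Real.sqrt_mul (sq_nonneg t), Real.sqrt_sq_eq_abs, frobNorm]

@[simp]
lemma finner_zero_left (B : Matrix (Fin m) (Fin n) ℝ) : finner 0 B = 0 := by
  simp [finner]

@[simp]
lemma finner_zero_right (A : Matrix (Fin m) (Fin n) ℝ) : finner A 0 = 0 := by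
  simp [finner]

lemma finner_sub_left (A B C : Matrix (Fin m) (Fin n) ℝ) :
    finner (A - B) C = finner A C - finner B C := by
  simp [finner, sub_mul, Finset.sum_sub_distrib]

lemma finner_mul_right (A : Matrix (Fin m) (Fin n) ℝ)
    (Q : Matrix (Fin m) (Fin d) ℝ) (D : Matrix (Fin d) (Fin n) ℝ) :
    finner A (Q * D) = finner (A * Dᵀ) Q := by
  simp only [finner, Matrix.mul_apply, Matrix.transpose_apply, Finset.mul_sum, Finset.sum_mul]
  refine Finset.sum_congr rfl fun i _ => ?_
  rw [Finset.sum_comm]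
  congr! 2; ring

lemma finner_le_frobNorm_mul (A B : Matrix (Fin m) (Fin n) ℝ) :
    finner A B ≤ frobNorm A * frobNorm B := by
  simpa [finner, frobNorm, frobSq, Fintype.sum_prod_type] using
    Real.sum_mul_le_sqrt_mul_sqrt Finset.univ (fun p : Fin m × Fin n => A p.1 p.2)
      (fun p => B p.1 p.2)

lemma frobSq_sub_leastSquares_le (D : Matrix (Fin d) (Fin n) ℝ)
    (hD : IsUnit (D * Dᵀ)) (M : Matrix (Fin m) (Fin n) ℝ) (P : Matrix (Fin m) (Fin d) ℝ) :
    frobSq (M - M * Dᵀ * (D * Dᵀ)⁻¹ * D) ≤ frobSq (M - P * D) := by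
  set P₀ := M * Dᵀ * (D * Dᵀ)⁻¹
  have horth : (M - P₀ * D) * Dᵀ = 0 := by
    rw [Matrix.sub_mul, Matrix.mul_assoc P₀, Matrix.mul_assoc (M * Dᵀ),
      Matrix.nonsing_inv_mul _ ((Matrix.isUnit_iff_isUnit_det _).mp hD), Matrix.mul_one, sub_self]
  have hsplit : M - P * D = (M - P₀ * D) + (P₀ - P) * D := by
    rw [Matrix.sub_mul]; abel
  rw [hsplit, frobSq_add, finner_mul_right, horth, finner_zero_left]
  linarith [frobSq_nonneg ((P₀ - P) * D)]

lemma image_one_le_of_deriv_le_add_mul {φ φ' : ℝ → ℝ} {C : ℝ}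
    (hφ : ∀ t ∈ Icc (0 : ℝ) 1, HasDerivAt φ (φ' t) t)
    (hbound : ∀ t ∈ Ico (0 : ℝ) 1, φ' t ≤ φ' 0 + C * t) :
    φ 1 ≤ φ 0 + φ' 0 + C / 2 := by
  have hB : ∀ t : ℝ, HasDerivAt (fun s => φ 0 + φ' 0 * s + C / 2 * s ^ 2) (φ' 0 + C * t) t := by
    intro t
    have h := (((hasDerivAt_id' t).const_mul (φ' 0)).const_add (φ 0)).add
      ((hasDerivAt_pow 2 t).const_mul (C / 2))
    exact h.congr_deriv (by push_cast; ring)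
  have := image_le_of_deriv_right_le_deriv_boundary
    (fun t ht => (hφ t ht).continuousAt.continuousWithinAt)
    (fun t ht => (hφ t (Ico_subset_Icc_self ht)).hasDerivWithinAt) (by simp)
    (fun t _ => (hB t).continuousAt.continuousWithinAt) (fun t _ => (hB t).hasDerivWithinAt)
    hbound (right_mem_Icc.2 zero_le_one)
  linarith

lemma hasDerivAt_comp_add_smul {E F : Type*} [NormedAddCommGroup E] [NormedSpace ℝ E]
    [NormedAddCommGroup F] [NormedSpace ℝ F] {f : E → F} {X H : E} {t : ℝ}
    (hf : DifferentiableAt ℝ f (X + t • H)) :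
    HasDerivAt (fun s : ℝ => f (X + s • H)) (fderiv ℝ f (X + t • H) H) t := by
  have hline : HasDerivAt (fun s : ℝ => X + s • H) H t := by
    simpa using ((hasDerivAt_id t).smul_const H).const_add X
  exact hf.hasFDerivAt.comp_hasDerivAt t hline

lemma le_add_finner_add_frobSq {L : ℝ} {f : Matrix (Fin m) (Fin n) ℝ → ℝ}
    {f' : Matrix (Fin m) (Fin n) ℝ → Matrix (Fin m) (Fin n) ℝ}
    (hdiff : ∀ X, DifferentiableAt ℝ f X ∧ ∀ H, fderiv ℝ f X H = finner (f' X) H)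
    (hlip : ∀ X Y, frobNorm (f' X - f' Y) ≤ L * frobNorm (X - Y))
    (X Y : Matrix (Fin m) (Fin n) ℝ) :
    f Y ≤ f X + finner (f' X) (Y - X) + L / 2 * frobSq (Y - X) := by
  set H := Y - X
  have hgrowth : ∀ t ∈ Ico (0 : ℝ) 1,
      finner (f' (X + t • H)) H ≤ finner (f' (X + (0 : ℝ) • H)) H + L * frobSq H * t := by
    intro t ht
    have hdist : frobNorm (X + t • H - X) = t * frobNorm H := by
      rw [add_sub_cancel_left, frobNorm_smul, abs_of_nonneg ht.1]
    calc finner (f' (X + t • H)) H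
        = finner (f' X) H + finner (f' (X + t • H) - f' X) H := by rw [finner_sub_left]; ring
      _ ≤ finner (f' X) H + frobNorm (f' (X + t • H) - f' X) * frobNorm H := by
          gcongr; exact finner_le_frobNorm_mul _ _
      _ ≤ finner (f' X) H + L * (t * frobNorm H) * frobNorm H := by
          gcongr
          · exact frobNorm_nonneg H
          · rw [← hdist]; exact hlip _ _
      _ = finner (f' (X + (0 : ℝ) • H)) H + L * frobSq H * t := by
          rw [zero_smul, add_zero, ← mul_self_frobNorm]; ring
  have := image_one_le_of_deriv_le_add_mul
    (fun t _ => (hdiff _).2 H ▸ hasDerivAt_comp_add_smul (hdiff _).1) hgrowth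
  rw [zero_smul, one_smul, add_zero, add_sub_cancel X Y] at this
  linarith

end

theorem stmt_14_general {m n d : ℕ} (L α β : ℝ) (hα : 0 < α) (hαL : α < 1 / L)
    (hβ : 0 < β)
    (D : Matrix (Fin d) (Fin n) ℝ) (hD : IsUnit (D * Dᵀ))
    (f : Matrix (Fin m) (Fin n) ℝ → ℝ)
    (f' : Matrix (Fin m) (Fin n) ℝ → Matrix (Fin m) (Fin n) ℝ)
    (hdiff : ∀ X : Matrix (Fin m) (Fin n) ℝ, DifferentiableAt ℝ f X ∧
      ∀ H : Matrix (Fin m) (Fin n) ℝ, fderiv ℝ f X H = finner (f' X) H)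
    (hlip : ∀ X Y : Matrix (Fin m) (Fin n) ℝ, frobNorm (f' X - f' Y) ≤ L * frobNorm (X - Y))
    (Mseq : ℕ → Matrix (Fin m) (Fin n) ℝ) (Pseq : ℕ → Matrix (Fin m) (Fin d) ℝ)
    (hMS : ∀ k, ∀ i : Fin n, colNorm (Mseq k) i = 1)
    (hMmin : ∀ k, ∀ N : Matrix (Fin m) (Fin n) ℝ, (∀ i : Fin n, colNorm N i = 1) →
      finner (f' (Mseq k)) (Mseq (k + 1) - Mseq k)
          + 1 / (2 * α) * frobSq (Mseq (k + 1) - Mseq k)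
          + 1 / (2 * β) * frobSq (Mseq (k + 1) - Pseq k * D) ≤
        finner (f' (Mseq k)) (N - Mseq k) + 1 / (2 * α) * frobSq (N - Mseq k)
          + 1 / (2 * β) * frobSq (N - Pseq k * D))
    (hPup : ∀ k, Pseq (k + 1) = Mseq (k + 1) * Dᵀ * (D * Dᵀ)⁻¹) :
    (∀ k, f (Mseq (k + 1)) + 1 / (2 * β) * frobSq (Mseq (k + 1) - Pseq (k + 1) * D) ≤
        f (Mseq k) + 1 / (2 * β) * frobSq (Mseq k - Pseq k * D)
          - (1 / (2 * α) - L / 2) * frobSq (Mseq (k + 1) - Mseq k)) ∧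
    Antitone (fun k => f (Mseq k) + 1 / (2 * β) * frobSq (Mseq k - Pseq k * D)) := by
  have hstep : ∀ k, f (Mseq (k + 1)) + 1 / (2 * β) * frobSq (Mseq (k + 1) - Pseq (k + 1) * D) ≤
      f (Mseq k) + 1 / (2 * β) * frobSq (Mseq k - Pseq k * D)
        - (1 / (2 * α) - L / 2) * frobSq (Mseq (k + 1) - Mseq k) := by
    intro k
    have hmin := hMmin k (Mseq k) (hMS k)
    simp only [sub_self, finner_zero_right, frobSq_zero, mul_zero, add_zero, zero_add] at hmin
    have hdesc := le_add_finner_add_frobSq hdiff hlip (Mseq k) (Mseq (k + 1))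
    have hls := frobSq_sub_leastSquares_le D hD (Mseq (k + 1)) (Pseq k)
    rw [← hPup k] at hls
    have hls' := mul_le_mul_of_nonneg_left hls (by positivity : 0 ≤ 1 / (2 * β))
    linarith
  refine ⟨hstep, antitone_nat_of_succ_le fun k => ?_⟩
  have hL : 0 < L := one_div_pos.mp (hα.trans hαL)
  have hcoef : L / 2 ≤ 1 / (2 * α) := by
    rw [div_le_div_iff₀ two_pos (by positivity)]
    nlinarith [(lt_div_iff₀ hL).mp hαL]
  linarith [hstep k, mul_nonneg (sub_nonneg.2 hcoef) (frobSq_nonneg (Mseq (k + 1) - Mseq k))]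

/-- monotone decrease of alternating minimization, Theorem 4(i):
with `F(M,P) = f(M) + (1/(2β))‖M − PD‖_F²`, if `M_{k+1}` minimizes the proximal surrogate
over the set `S` of matrices with unit-norm columns and `P_{k+1} = M_{k+1}Dᵀ(DDᵀ)⁻¹`, then
`F(M_{k+1},P_{k+1}) ≤ F(M_k,P_k) − (1/(2α) − L/2)‖M_{k+1} − M_k‖_F²`; in particular
`F(M_k,P_k)` is monotonically nonincreasing. -/
theorem stmt_14 {m n d : ℕ} (L α β : ℝ) (hL : 0 < L) (hα : 0 < α) (hαL : α < 1 / L)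
    (hβ : 0 < β)
    (D : Matrix (Fin d) (Fin n) ℝ) (hD : IsUnit (D * Dᵀ))
    (f : Matrix (Fin m) (Fin n) ℝ → ℝ)
    (f' : Matrix (Fin m) (Fin n) ℝ → Matrix (Fin m) (Fin n) ℝ)
    (hdiff : ∀ X : Matrix (Fin m) (Fin n) ℝ, DifferentiableAt ℝ f X ∧
      ∀ H : Matrix (Fin m) (Fin n) ℝ, fderiv ℝ f X H = finner (f' X) H)
    (hlip : ∀ X Y : Matrix (Fin m) (Fin n) ℝ, frobNorm (f' X - f' Y) ≤ L * frobNorm (X - Y))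
    (Mseq : ℕ → Matrix (Fin m) (Fin n) ℝ) (Pseq : ℕ → Matrix (Fin m) (Fin d) ℝ)
    (hMS : ∀ k, ∀ i : Fin n, colNorm (Mseq k) i = 1)
    (hMmin : ∀ k, ∀ N : Matrix (Fin m) (Fin n) ℝ, (∀ i : Fin n, colNorm N i = 1) →
      finner (f' (Mseq k)) (Mseq (k + 1) - Mseq k)
          + 1 / (2 * α) * frobSq (Mseq (k + 1) - Mseq k)
          + 1 / (2 * β) * frobSq (Mseq (k + 1) - Pseq k * D) ≤
        finner (f' (Mseq k)) (N - Mseq k) + 1 / (2 * α) * frobSq (N - Mseq k)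
          + 1 / (2 * β) * frobSq (N - Pseq k * D))
    (hPup : ∀ k, Pseq (k + 1) = Mseq (k + 1) * Dᵀ * (D * Dᵀ)⁻¹) :
    (∀ k, f (Mseq (k + 1)) + 1 / (2 * β) * frobSq (Mseq (k + 1) - Pseq (k + 1) * D) ≤
        f (Mseq k) + 1 / (2 * β) * frobSq (Mseq k - Pseq k * D)
          - (1 / (2 * α) - L / 2) * frobSq (Mseq (k + 1) - Mseq k)) ∧
    Antitone (fun k => f (Mseq k) + 1 / (2 * β) * frobSq (Mseq k - Pseq k * D)) :=
  stmt_14_general L α β hα hαL hβ D hD f f' hdiff hlip Mseq Pseq hMS hMmin hPup
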